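/- Let δ = 2^{−k} and d ∈ ℕ, and let g: ℝ^d → ℝ^d be a two-layer δ-quantized ReLU network g(x) = M₂ σ(M₁ x) with M₁ ∈ ℝ^{w×d}, M₂ ∈ ℝ^{d×w}, whose weight entries are sampled from arbitrary distributions over S_δ. Suppose there is a constant p ∈ (0,1] such that, with probability at least p, every function h_W(x) = [I, −I] σ([W; −W]x) with W ∈ S_δ^{d×d} can be obtained by pruning g. Then the hidden width w of g satisfies w = Ω(d·log₂(1/δ)); i.e., there is a constant c > 0 (depending only on p) with w ≥ c·d·log₂(1/δ). -/

import Mathlib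

open MeasureTheory ProbabilityTheory
open scoped ENNReal

/-- The set `S_δ = {-1, -1+δ, -1+2δ, …, 1}` for `δ = 2^{-k}`. -/
noncomputable def Sq (k : ℕ) : Finset ℝ :=
  (Finset.range (2 ^ (k + 1) + 1)).image (fun j : ℕ => -1 + (j : ℝ) * (2 : ℝ) ^ (-(k : ℤ)))

/-- `h_W(x) = [I, -I]·σ([W; -W]·x)`, written coordinatewise:
`(h_W x) r = σ((Wx)_r) - σ((-Wx)_r)`. -/
noncomputable def hW (d : ℕ) (W : Fin d → Fin d → ℝ) (x : Fin d → ℝ) : Fin d → ℝ :=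
  fun r => max 0 (∑ c, W r c * x c) - max 0 (∑ c, -W r c * x c)

/-!
Since `p > 0`, the event has an outcome ω; fix one. Choosing, for each target
`W ∈ S_δ^{d×d}`, masks that prune `g` to `h_W` is injective in `W`, because `h_W` recovers `W`
from the standard basis vectors: `h_W(e_c)_r = W r c`. There are only `2^{2dw}` pairs of masks
but `(2/δ + 1)^{d²}` targets, so `2dw ≥ d² log₂(2/δ) = d²(k + 1)`, i.e. `w ≥ d(k + 1)/2`.
-/

theorem Sq_card (k : ℕ) : (Sq k).card = 2 ^ (k + 1) + 1 := by
  refine (Finset.card_image_of_injective _ fun a b hab => ?_).trans (Finset.card_range _)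
  have hδ : (2 : ℝ) ^ (-(k : ℤ)) ≠ 0 := by positivity
  exact_mod_cast mul_right_cancel₀ hδ (add_left_cancel hab)

theorem hW_apply_single {d : ℕ} (W : Fin d → Fin d → ℝ) (r c : Fin d) :
    hW d W (Pi.single c 1) r = W r c := by
  simp only [hW, Pi.single_apply, mul_ite, mul_one, mul_zero, Finset.sum_ite_eq',
    Finset.mem_univ, if_true]
  rcases le_total 0 (W r c) with h | h
  · rw [max_eq_right h, max_eq_left (by linarith)]; ring
  · rw [max_eq_left h, max_eq_right (by linarith)]; ring

theorem hW_injective (d : ℕ) : Function.Injective (hW d) := fun W W' h =>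
  funext fun r => funext fun c => by
    rw [← hW_apply_single W, ← hW_apply_single W', h]

/-- The network `x ↦ M₂ σ(M₁ x)` after pruning `M₁` by the mask `S₁` and `M₂` by `S₂`. -/
noncomputable def prunedNet {d wd : ℕ} (M₁ : Fin wd → Fin d → ℝ) (M₂ : Fin d → Fin wd → ℝ)
    (S₁ : Fin wd → Fin d → Bool) (S₂ : Fin d → Fin wd → Bool) (x : Fin d → ℝ) : Fin d → ℝ :=
  fun r => ∑ j, (if S₂ r j then M₂ r j else 0) *
    max 0 (∑ i, (if S₁ j i then M₁ j i else 0) * x i)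

theorem card_pow_le_of_forall_hW_eq_prunedNet {k d wd : ℕ}
    (M₁ : Fin wd → Fin d → ℝ) (M₂ : Fin d → Fin wd → ℝ)
    (h : ∀ W : Fin d → Fin d → ℝ, (∀ r c, W r c ∈ Sq k) →
      ∃ S₁ S₂, prunedNet M₁ M₂ S₁ S₂ = hW d W) :
    (2 ^ (k + 1) + 1) ^ (d * d) ≤ 2 ^ (2 * (d * wd)) := by
  choose S₁ S₂ hS using fun V : Fin d → Fin d → Sq k => h (fun r c => V r c) fun r c => (V r c).2
  have hinj : Function.Injective fun V => (S₁ V, S₂ V) := fun V V' hV => by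
    simp only [Prod.mk.injEq] at hV
    have hW_eq : (fun r c => (V r c : ℝ)) = fun r c => (V' r c : ℝ) :=
      hW_injective d <| by rw [← hS V, ← hS V', hV.1, hV.2]
    funext r c
    exact Subtype.ext (congrFun₂ hW_eq r c)
  have hcard := Fintype.card_le_of_injective _ hinj
  simp only [Fintype.card_prod, Fintype.card_fun, Fintype.card_bool, Fintype.card_coe, Sq_card,
    Fintype.card_fin] at hcard
  calc (2 ^ (k + 1) + 1) ^ (d * d) = ((2 ^ (k + 1) + 1) ^ d) ^ d := pow_mul _ _ _
    _ ≤ (2 ^ d) ^ wd * (2 ^ wd) ^ d := hcard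
    _ = 2 ^ (2 * (d * wd)) := by rw [← pow_mul, ← pow_mul, ← pow_add]; ring_nf

theorem succ_mul_le_two_mul_of_pow_le {k d wd : ℕ}
    (h : (2 ^ (k + 1) + 1) ^ (d * d) ≤ 2 ^ (2 * (d * wd))) : (k + 1) * d ≤ 2 * wd := by
  rcases Nat.eq_zero_or_pos d with rfl | hd
  · simp
  have hpow : 2 ^ ((k + 1) * d * d) ≤ 2 ^ (2 * wd * d) := calc
    2 ^ ((k + 1) * d * d) = (2 ^ (k + 1)) ^ (d * d) := by rw [← pow_mul, mul_assoc]
    _ ≤ (2 ^ (k + 1) + 1) ^ (d * d) := Nat.pow_le_pow_left (Nat.le_succ _) _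
    _ ≤ 2 ^ (2 * (d * wd)) := h
    _ = 2 ^ (2 * wd * d) := by ring_nf
  exact Nat.le_of_mul_le_mul_right ((Nat.pow_le_pow_iff_right (by norm_num)).1 hpow) hd

theorem quantized_slth_width_lower_bound_general (p : ℝ) (hp0 : 0 < p) :
    ∃ c : ℝ, 0 < c ∧
      ∀ (k d wd : ℕ)
        (Ω : Type) [MeasureSpace Ω] [IsProbabilityMeasure (ℙ : Measure Ω)]
        (M₁ : Fin wd → Fin d → Ω → ℝ) (M₂ : Fin d → Fin wd → Ω → ℝ),
        (∀ j i ω, M₁ j i ω ∈ Sq k) →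
        (∀ r j ω, M₂ r j ω ∈ Sq k) →
        p ≤ (ℙ {ω | ∀ W : Fin d → Fin d → ℝ, (∀ r c, W r c ∈ Sq k) →
            ∃ (S₁ : Fin wd → Fin d → Bool) (S₂ : Fin d → Fin wd → Bool),
              ∀ (x : Fin d → ℝ) (r : Fin d),
                (∑ j, (if S₂ r j then M₂ r j ω else 0) *
                    max 0 (∑ i, (if S₁ j i then M₁ j i ω else 0) * x i)) =
                  hW d W x r}).toReal →
        c * (d : ℝ) * (k : ℝ) ≤ (wd : ℝ) := by
  refine ⟨1 / 2, one_half_pos, fun k d wd Ω _ _ M₁ M₂ _ _ hprob => ?_⟩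
  obtain ⟨ω, hω⟩ := nonempty_of_measure_ne_zero fun h0 => by
    rw [h0, ENNReal.toReal_zero] at hprob
    exact hprob.not_gt hp0
  have hwidth : (k + 1) * d ≤ 2 * wd := succ_mul_le_two_mul_of_pow_le <|
    card_pow_le_of_forall_hW_eq_prunedNet (fun j i => M₁ j i ω) (fun r j => M₂ r j ω)
      fun W hW => let ⟨S₁, S₂, h⟩ := hω W hW; ⟨S₁, S₂, funext fun x => funext (h x)⟩
  have hwidth' : ((k + 1) * d : ℝ) ≤ 2 * wd := by exact_mod_cast hwidth
  nlinarith [d.cast_nonneg (α := ℝ)]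

/-- width lower bound for two-layer quantized strong lottery tickets.
Let `g(x) = M₂σ(M₁x)` be a two-layer `δ`-quantized ReLU network (`δ = 2^{-k}`) of hidden
width `wd`, with weight entries sampled from arbitrary distributions over `S_δ`. If, with
probability at least `p`, *every* function `h_W` with `W ∈ S_δ^{d×d}` can be obtained by
pruning `g`, then `wd = Ω(d·log₂(1/δ))`: there is a constant `c > 0`, depending only on `p`,
with `wd ≥ c·d·log₂(1/δ)`. -/
theorem quantized_slth_width_lower_bound (p : ℝ) (hp0 : 0 < p) (hp1 : p ≤ 1) :
    ∃ c : ℝ, 0 < c ∧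
      ∀ (k d wd : ℕ)
        (Ω : Type) [MeasureSpace Ω] [IsProbabilityMeasure (ℙ : Measure Ω)]
        (M₁ : Fin wd → Fin d → Ω → ℝ) (M₂ : Fin d → Fin wd → Ω → ℝ),
        (∀ j i ω, M₁ j i ω ∈ Sq k) →
        (∀ r j ω, M₂ r j ω ∈ Sq k) →
        p ≤ (ℙ {ω | ∀ W : Fin d → Fin d → ℝ, (∀ r c, W r c ∈ Sq k) →
            ∃ (S₁ : Fin wd → Fin d → Bool) (S₂ : Fin d → Fin wd → Bool),
              ∀ (x : Fin d → ℝ) (r : Fin d),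
                (∑ j, (if S₂ r j then M₂ r j ω else 0) *
                    max 0 (∑ i, (if S₁ j i then M₁ j i ω else 0) * x i)) =
                  hW d W x r}).toReal →
        c * (d : ℝ) * (k : ℝ) ≤ (wd : ℝ) :=
  quantized_slth_width_lower_bound_general p hp0
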